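/- Let A = (Q, Σ, Δ, q0, F) be a complete NFA with finite state set Q. Suppose there exist a state q ∈ Q and strings s0, s, s1 ∈ Σ* such that: (i) there is a run of A from q0 to q labeled by s0, (ii) there exist two distinct runs of A from q to q both labeled by s, and (iii) no run of A from q labeled by s1 ends in an accepting state. Then for every natural number k there exists a non-accepting state q_r ∈ Q \ F such that the number of distinct runs of A from q0 to q_r labeled by s0·s^k·s1 is at least 2^k / |Q|. -/

import Mathlib

/-- A nondeterministic finite automaton `A = (Q, Σ, Δ, q0, F)` with state type `Q`,
alphabet `A`, transition function `δ`, initial state `q0` and accepting states `F`. -/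
structure NFA' (Q A : Type*) where
  δ : Q → A → Set Q
  q0 : Q
  F : Set Q

namespace NFA'

variable {Q A : Type*}

/-- `ρ` is a run of the automaton labeled by the word `w`: the state sequence
`ρ 0, ρ 1, …, ρ |w|` follows transitions of `M` along the letters of `w`. -/
def IsRunOn (M : NFA' Q A) (w : List A) (ρ : Fin (w.length + 1) → Q) : Prop :=
  ∀ i : Fin w.length, ρ i.succ ∈ M.δ (ρ i.castSucc) (w.get i)

/-- The set of runs of `M` from `p` to `r` labeled by the word `w`,
represented by their state sequences. -/
def Runs (M : NFA' Q A) (p r : Q) (w : List A) : Set (Fin (w.length + 1) → Q) :=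
  {ρ | ρ 0 = p ∧ ρ (Fin.last w.length) = r ∧ M.IsRunOn w ρ}

end NFA'

/-- `wordPow s k` is the `k`-fold concatenation `s^k` of the word `s`. -/
def wordPow {A : Type*} (s : List A) : ℕ → List A
  | 0 => []
  | k + 1 => s ++ wordPow s k

/-!
Choosing one of the two loops at `q` independently for each of the `k` copies of `s` gives
`2 ^ k` pairwise distinct runs from `q` to `q` on `s ^ k`. Completeness provides some run on
`s₁` from `q`, whose end state `q_r` is non-accepting by (iii); gluing a run on `s₀` in front
and this run behind keeps the runs distinct, so the single state `q_r` already carries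
`2 ^ k ≥ 2 ^ k / |Q|` runs.
-/

namespace NFA'

variable {Q A : Type*} (M : NFA' Q A)

theorem mem_runs_nil {p r : Q} {ρ : Fin 1 → Q} : ρ ∈ M.Runs p r [] ↔ ρ 0 = p ∧ p = r := by
  simp only [Runs, IsRunOn, Set.mem_ofPred_eq, List.length_nil, Fin.last_zero, IsEmpty.forall_iff,
    and_true]
  grind

theorem cons_mem_runs_cons {p r x : Q} {a : A} {w : List A} {ρ : Fin (w.length + 1) → Q} :
    (Fin.cons x ρ : Fin (w.length + 2) → Q) ∈ M.Runs p r (a :: w) ↔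
      x = p ∧ ρ 0 ∈ M.δ p a ∧ ρ ∈ M.Runs (ρ 0) r w := by
  simp only [Runs, IsRunOn, Set.mem_ofPred_eq, Fin.forall_fin_succ, List.length_cons,
    Fin.cons_zero, Fin.cons_succ, Fin.castSucc_zero, ← Fin.succ_last, ← Fin.succ_castSucc,
    List.get_eq_getElem, Fin.val_zero, Fin.val_succ, List.getElem_cons_zero, List.getElem_cons_succ]
  constructor <;> rintro ⟨rfl, h⟩ <;> tauto

/-- The last state of `ρ` is dropped in favour of the first state of `σ`. -/
def runAppend {v : List A} :
    (u : List A) → (Fin (u.length + 1) → Q) → (Fin (v.length + 1) → Q) →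
      Fin ((u ++ v).length + 1) → Q
  | [], ρ, σ => Fin.cons (ρ 0) (Fin.tail σ)
  | _ :: u, ρ, σ => Fin.cons (ρ 0) (runAppend u (Fin.tail ρ) σ)

theorem runAppend_mem_runs {p m r : Q} {u v : List A} {ρ : Fin (u.length + 1) → Q}
    {σ : Fin (v.length + 1) → Q} (hρ : ρ ∈ M.Runs p m u) (hσ : σ ∈ M.Runs m r v) :
    runAppend u ρ σ ∈ M.Runs p r (u ++ v) := by
  induction u generalizing p with
  | nil =>
    obtain ⟨hρ0, rfl⟩ := (M.mem_runs_nil).1 hρ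
    rw [runAppend, hρ0, ← hσ.1, Fin.cons_self_tail, hσ.1]
    exact hσ
  | cons a u ih =>
    rw [← Fin.cons_self_tail ρ, cons_mem_runs_cons] at hρ
    obtain ⟨hρ0, hstep, htail⟩ := hρ
    have hrest := ih htail
    rw [← hrest.1] at hstep hrest
    exact (M.cons_mem_runs_cons (w := u ++ v)).2 ⟨hρ0, hstep, hrest⟩

theorem runAppend_inj {u v : List A} {ρ ρ' : Fin (u.length + 1) → Q}
    {σ σ' : Fin (v.length + 1) → Q} (h0 : σ 0 = σ' 0)
    (h : runAppend u ρ σ = runAppend u ρ' σ') : ρ = ρ' ∧ σ = σ' := by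
  induction u with
  | nil =>
    obtain ⟨hρ0, htail⟩ := Fin.cons_inj.1 h
    refine ⟨funext fun i => ?_, ?_⟩
    · rwa [Fin.fin_one_eq_zero i]
    · rw [← Fin.cons_self_tail σ, ← Fin.cons_self_tail σ', h0, htail]
  | cons a u ih =>
    obtain ⟨hρ0, hrest⟩ := Fin.cons_inj.1 h
    obtain ⟨htail, hσ⟩ := ih hrest
    exact ⟨by rw [← Fin.cons_self_tail ρ, ← Fin.cons_self_tail ρ', hρ0, htail], hσ⟩

theorem encard_runs_mul_encard_runs_le {p m r : Q} (u v : List A) :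
    (M.Runs p m u).encard * (M.Runs m r v).encard ≤ (M.Runs p r (u ++ v)).encard := by
  rw [← Set.encard_prod]
  refine Set.encard_le_encard_of_injOn (f := fun x => runAppend u x.1 x.2)
    (fun x hx => M.runAppend_mem_runs hx.1 hx.2) ?_
  rintro ⟨ρ, σ⟩ ⟨-, hσ⟩ ⟨ρ', σ'⟩ ⟨-, hσ'⟩ h
  obtain ⟨rfl, rfl⟩ := runAppend_inj (hσ.1.trans hσ'.1.symm) h
  rfl

theorem encard_runs_pow_le_encard_runs_wordPow (q : Q) (s : List A) (k : ℕ) :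
    (M.Runs q q s).encard ^ k ≤ (M.Runs q q (wordPow s k)).encard := by
  induction k with
  | zero =>
    rw [pow_zero, Set.one_le_encard_iff_nonempty]
    exact ⟨fun _ => q, (M.mem_runs_nil).2 ⟨rfl, rfl⟩⟩
  | succ k ih =>
    calc (M.Runs q q s).encard ^ (k + 1)
        ≤ (M.Runs q q s).encard * (M.Runs q q (wordPow s k)).encard := by
          rw [pow_succ']; gcongr
      _ ≤ (M.Runs q q (wordPow s (k + 1))).encard := M.encard_runs_mul_encard_runs_le _ _

theorem exists_runs_nonempty (hcomplete : ∀ (p : Q) (a : A), (M.δ p a).Nonempty) :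
    ∀ (p : Q) (w : List A), ∃ r, (M.Runs p r w).Nonempty
  | p, [] => ⟨p, fun _ => p, (M.mem_runs_nil).2 ⟨rfl, rfl⟩⟩
  | p, a :: w => by
    obtain ⟨p', hp'⟩ := hcomplete p a
    obtain ⟨r, ρ, hρ⟩ := exists_runs_nonempty hcomplete p' w
    exact ⟨r, Fin.cons p ρ, (M.cons_mem_runs_cons).2 ⟨rfl, hρ.1 ▸ hp', hρ.1 ▸ hρ⟩⟩

end NFA'

/-- For a complete NFA with finitely many states: if `q` is reachable from `q0` via `s0`,
there are two distinct loops at `q` labeled by `s`, and no run from `q` labeled by `s1`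
ends in an accepting state, then for every `k` some non-accepting state `q_r` admits at
least `2^k / |Q|` distinct runs from `q0` labeled by `s0 · s^k · s1`. -/
theorem hyperVulnerable_exponential_runs_of_complete {Q A : Type*} [Fintype Q]
    (M : NFA' Q A) (hcomplete : ∀ (p : Q) (a : A), (M.δ p a).Nonempty)
    (q : Q) (s₀ s s₁ : List A)
    (hpre : (M.Runs M.q0 q s₀).Nonempty)
    (hcore : ∃ ρ₁ ρ₂, ρ₁ ∈ M.Runs q q s ∧ ρ₂ ∈ M.Runs q q s ∧ ρ₁ ≠ ρ₂)
    (hsuf : ∀ r : Q, r ∈ M.F → M.Runs q r s₁ = ∅) :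
    ∀ k : ℕ, ∃ qr : Q, qr ∉ M.F ∧
      ((2 ^ k / Fintype.card Q : ℕ) : ℕ∞) ≤
        (M.Runs M.q0 qr (s₀ ++ wordPow s k ++ s₁)).encard := by
  intro k
  obtain ⟨qr, hsuffix⟩ := M.exists_runs_nonempty hcomplete q s₁
  refine ⟨qr, fun hqr => hsuffix.ne_empty (hsuf qr hqr), ?_⟩
  have hloops : 2 ≤ (M.Runs q q s).encard :=
    Order.add_one_le_of_lt (Set.one_lt_encard_iff.2 hcore)
  calc ((2 ^ k / Fintype.card Q : ℕ) : ℕ∞)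
      ≤ 2 ^ k := by exact_mod_cast Nat.div_le_self _ _
    _ ≤ (M.Runs q q s).encard ^ k := by gcongr
    _ ≤ (M.Runs q q (wordPow s k)).encard := M.encard_runs_pow_le_encard_runs_wordPow q s k
    _ = 1 * (M.Runs q q (wordPow s k)).encard * 1 := by rw [one_mul, mul_one]
    _ ≤ (M.Runs M.q0 q s₀).encard * (M.Runs q q (wordPow s k)).encard *
          (M.Runs q qr s₁).encard := by
        gcongr
        exacts [Set.one_le_encard_iff_nonempty.2 hpre, Set.one_le_encard_iff_nonempty.2 hsuffix]
    _ ≤ (M.Runs M.q0 qr (s₀ ++ wordPow s k ++ s₁)).encard :=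
        (mul_le_mul_left (M.encard_runs_mul_encard_runs_le _ _) _).trans
          (M.encard_runs_mul_encard_runs_le _ _)
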